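/- arXiv:2504.20172 — 3 statements merged into one kernel-verified Lean document; each statement's English description precedes it below -/
import Mathlib

section
/- Let k ≥ 1, w = 3k+1, 0 ≤ j ≤ w−1, and t ≤ w/3 − 1. In the graph G_w, if X_{j',t'} has a directed path (possibly of length 0) to X_{j,t}, then j' ≡ j − 3s (mod w) for some integer s with 0 ≤ s ≤ t − t'. In particular, no vertex in row (j+1) mod w or in row (j+2) mod w has a directed path to X_{j,t}. -/
open Relation

/-- Vertices of a time series graph: `(i, t)` is the vertex in row `i` and layer (time) `t`. -/
abbrev Vtx : Type := ℕ × ℕ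

/-- A mixed graph (directed and bidirected edges) on vertices `(row, time)`. -/
structure MixedGraph where
  verts : Set Vtx
  dir : Vtx → Vtx → Prop
  bi : Vtx → Vtx → Prop

/-- `F` is a subgraph of `H`: its vertices are vertices of `H` and its (directed and
bidirected) edges are edges of `H` with endpoints in `F`. -/
def MixedGraph.IsSubgraphOf (F H : MixedGraph) : Prop :=
  F.verts ⊆ H.verts ∧
  (∀ u v, F.dir u v → H.dir u v ∧ u ∈ F.verts ∧ v ∈ F.verts) ∧
  (∀ u v, F.bi u v → H.bi u v ∧ u ∈ F.verts ∧ v ∈ F.verts)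

/-- Ancestors of `Y` along the directed relation `r`: vertices having a directed
path (possibly of length 0) to some vertex of `Y`. -/
def ancestors (r : Vtx → Vtx → Prop) (Y : Set Vtx) : Set Vtx :=
  {v | ∃ y ∈ Y, Relation.ReflTransGen r v y}

/-- The relation `r` with all directed edges pointing into `X` removed (`H_{X̄}`). -/
def withoutInto (r : Vtx → Vtx → Prop) (X : Set Vtx) : Vtx → Vtx → Prop :=
  fun u v => r u v ∧ v ∉ X

/-- A C-component: every pair of vertices is joined by a path of bidirected edges. -/
def MixedGraph.IsCComponent (F : MixedGraph) : Prop :=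
  ∀ u ∈ F.verts, ∀ v ∈ F.verts,
    Relation.ReflTransGen (fun a b => F.bi a b ∨ F.bi b a) u v

/-- A forest: every vertex has at most one child along directed edges. -/
def MixedGraph.IsForest (F : MixedGraph) : Prop :=
  ∀ u v₁ v₂, F.dir u v₁ → F.dir u v₂ → v₁ = v₂

/-- A C-forest is both a C-component and a forest. -/
def MixedGraph.IsCForest (F : MixedGraph) : Prop :=
  F.IsCComponent ∧ F.IsForest

/-- The roots of a graph: vertices with no child. -/
def MixedGraph.roots (F : MixedGraph) : Set Vtx :=
  {v ∈ F.verts | ∀ u, ¬ F.dir v u}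

/-- A hedge for `X, Y` in the ambient graph `H`: a pair of finite subgraphs `F' ⊆ F ⊆ H`,
both C-forests, with `X ⊆ V(F) \ V(F')`, sharing the same root set `R`, and
`R ⊆ An(Y, H_{X̄})`. -/
def IsHedge (H : MixedGraph) (X Y : Set Vtx) (F F' : MixedGraph) : Prop :=
  F.IsSubgraphOf H ∧ F'.IsSubgraphOf F ∧ F.verts.Finite ∧
  X ⊆ F.verts \ F'.verts ∧
  F.IsCForest ∧ F'.IsCForest ∧
  F.roots = F'.roots ∧
  F.roots ⊆ ancestors (withoutInto H.dir X) Y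

/-- There exists a hedge for `X, Y` in `H` (equivalently, by the hedge criterion,
`P(Y | do X)` is unidentifiable in `H`). -/
def HedgeExists (H : MixedGraph) (X Y : Set Vtx) : Prop :=
  ∃ F F' : MixedGraph, IsHedge H X Y F F'

/-- A periodic causal graph of width `w`: an acyclic directed mixed graph on the
vertices `(i, t)`, `i < w`, `t : ℕ`, whose edges are invariant under time shifts,
and whose directed edges never go backwards in time. -/
structure PeriodicCausalGraph (w : ℕ) where
  dir : Vtx → Vtx → Prop
  bi : Vtx → Vtx → Prop
  dir_row : ∀ u v, dir u v → u.1 < w ∧ v.1 < w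
  bi_row : ∀ u v, bi u v → u.1 < w ∧ v.1 < w
  bi_symm : ∀ u v, bi u v → bi v u
  dir_forward : ∀ u v, dir u v → u.2 ≤ v.2
  dir_shift : ∀ i t i' t', dir (i, t) (i', t') ↔ dir (i, t + 1) (i', t' + 1)
  bi_shift : ∀ i t i' t', bi (i, t) (i', t') ↔ bi (i, t + 1) (i', t' + 1)
  acyclic : ∀ v, ¬ Relation.TransGen dir v v

/-- `G` has latency `L`: every directed or bidirected edge spans at most `L` time steps. -/
def PeriodicCausalGraph.HasLatency {w : ℕ} (G : PeriodicCausalGraph w) (L : ℕ) : Prop :=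
  (∀ u v, G.dir u v → Nat.dist u.2 v.2 ≤ L) ∧
  (∀ u v, G.bi u v → Nat.dist u.2 v.2 ≤ L)

/-- The whole graph `G` viewed as a mixed graph. -/
def PeriodicCausalGraph.whole {w : ℕ} (G : PeriodicCausalGraph w) : MixedGraph :=
  ⟨{v | v.1 < w}, G.dir, G.bi⟩

/-- The segment `G[T, T']`: the induced subgraph on vertices with layer in `[T, T']`. -/
def PeriodicCausalGraph.segment {w : ℕ} (G : PeriodicCausalGraph w) (T T' : ℕ) : MixedGraph :=
  ⟨{v | v.1 < w ∧ T ≤ v.2 ∧ v.2 ≤ T'},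
   fun u v => G.dir u v ∧ (T ≤ u.2 ∧ u.2 ≤ T') ∧ (T ≤ v.2 ∧ v.2 ≤ T'),
   fun u v => G.bi u v ∧ (T ≤ u.2 ∧ u.2 ≤ T') ∧ (T ≤ v.2 ∧ v.2 ≤ T')⟩

/-- The minimum layer of a set of vertices. -/
noncomputable def tmin (S : Set Vtx) : ℕ := sInf (Prod.snd '' S)

/-- The maximum layer of a (finite nonempty) set of vertices. -/
noncomputable def tmax (S : Set Vtx) : ℕ := sSup (Prod.snd '' S)

/-- `dist(X, Y)`: the minimum layer distance between a vertex of `X` and one of `Y`. -/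
noncomputable def layerDist (X Y : Set Vtx) : ℕ :=
  sInf {d | ∃ u ∈ X, ∃ v ∈ Y, d = Nat.dist u.2 v.2}

/-- The set `S` shifted `Δ` layers to the future, `S_{+Δ}`. -/
def shiftUp (Δ : ℕ) (S : Set Vtx) : Set Vtx := (fun v : Vtx => (v.1, v.2 + Δ)) '' S

/-- The set `S` shifted `Δ` layers to the past, `S_{-Δ}` (meaningful when `tmin S ≥ Δ`). -/
def shiftDown (Δ : ℕ) (S : Set Vtx) : Set Vtx := (fun v : Vtx => (v.1, v.2 - Δ)) '' S

/-- The map `Φ_{b,Δ}`: identity on layers `≤ b`, translation by `-Δ` on layers `> b + Δ`. -/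
def Phi (b Δ : ℕ) (v : Vtx) : Vtx := if v.2 ≤ b then v else (v.1, v.2 - Δ)

/-- The image of a mixed graph under a vertex map (vertices and edges mapped). -/
def MixedGraph.mapImage (F : MixedGraph) (f : Vtx → Vtx) : MixedGraph :=
  ⟨f '' F.verts,
   fun u v => ∃ a c, F.dir a c ∧ u = f a ∧ v = f c,
   fun u v => ∃ a c, F.bi a c ∧ u = f a ∧ v = f c⟩

/-- `F \ G[b+1, b+Δ]`: the restriction of `F` to vertices with layer outside
`{b+1, …, b+Δ}`. -/
def MixedGraph.outsideLayers (F : MixedGraph) (b Δ : ℕ) : MixedGraph :=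
  ⟨{v ∈ F.verts | v.2 ≤ b ∨ b + Δ < v.2},
   fun u v => F.dir u v ∧ (u.2 ≤ b ∨ b + Δ < u.2) ∧ (v.2 ≤ b ∨ b + Δ < v.2),
   fun u v => F.bi u v ∧ (u.2 ≤ b ∨ b + Δ < u.2) ∧ (v.2 ≤ b ∨ b + Δ < v.2)⟩

/-- `u` and `v` (in layer `≤ t`) are left-connected in `F` at time `t`: they are joined
by a path of bidirected edges of `F` using only vertices of layer `≤ t`. -/
def leftConnected (F : MixedGraph) (t : ℕ) (u v : Vtx) : Prop :=
  Relation.ReflTransGen (fun a b => (F.bi a b ∨ F.bi b a) ∧ a.2 ≤ t ∧ b.2 ≤ t) u v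

/-- `α_F(t) = α_F(t')`: the ordered partitions of `{0, …, w-1}` (first block the rows `i`
with `(i,t) ∉ V(F)`, subsequent blocks the left-connected components of the layer-`t`
vertices of `F`, sorted by smallest index and padded with empty blocks) agree at layers
`t` and `t'`.  Two such ordered partitions are equal precisely when the corresponding
membership and left-connectedness data agree. -/
def alphaEq (w : ℕ) (F : MixedGraph) (t t' : ℕ) : Prop :=
  (∀ i < w, (((i, t) : Vtx) ∈ F.verts ↔ ((i, t') : Vtx) ∈ F.verts)) ∧
  (∀ i < w, ∀ j < w,
    (leftConnected F t (i, t) (j, t) ↔ leftConnected F t' (i, t') (j, t')))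

/-- `β(t)` (as a set of rows): the rows `i` such that the layer-`t` vertex `(i, t)` of `G`
belongs to `An(Y, G_{X̄})`. -/
def betaRows {w : ℕ} (G : PeriodicCausalGraph w) (X Y : Set Vtx) (t : ℕ) : Set ℕ :=
  {i | i < w ∧ ((i, t) : Vtx) ∈ ancestors (withoutInto G.dir X) Y}

/-- The directed edges of the lower-bound graph `G_w`: from `X_{i,t}` to `X_{i,t+1}`
and to `X_{(i+3) % w, t+1}`. -/
def GwDir (w : ℕ) (u v : Vtx) : Prop :=
  u.1 < w ∧ v.2 = u.2 + 1 ∧ (v.1 = u.1 ∨ v.1 = (u.1 + 3) % w)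

/-- Half of the bidirected edge relation of `G_w`: from `X_{i,t}` to `X_{(i+1) % w, t+1}`
and to `X_{(i+2) % w, t+1}`. -/
def GwBiHalf (w : ℕ) (u v : Vtx) : Prop :=
  u.1 < w ∧ v.2 = u.2 + 1 ∧ (v.1 = (u.1 + 1) % w ∨ v.1 = (u.1 + 2) % w)

/-- The bidirected edges of `G_w` (symmetrized). -/
def GwBi (w : ℕ) (u v : Vtx) : Prop := GwBiHalf w u v ∨ GwBiHalf w v u

/-- The graph `G_w` as a mixed graph. -/
def GwAmbient (w : ℕ) : MixedGraph := ⟨{v | v.1 < w}, GwDir w, GwBi w⟩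

/-- The aggregation map `φ(X_{i,t}) = Y_{i + w·(t % L), ⌊t/L⌋}`. -/
def phiAgg (w L : ℕ) (v : Vtx) : Vtx := (v.1 + w * (v.2 % L), v.2 / L)

/-- A mixed graph shifted `Δ` layers to the future. -/
def shiftGraph (Δ : ℕ) (F : MixedGraph) : MixedGraph :=
  F.mapImage (fun v => (v.1, v.2 + Δ))

lemma GwDir_path_row (w : ℕ) (u v : Vtx)
    (h : Relation.ReflTransGen (GwDir w) u v) :
    u.2 ≤ v.2 ∧ ∃ s : ℕ, s ≤ v.2 - u.2 ∧ (v.1 : ZMod w) = u.1 + 3 * s := by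
  induction h with
  | refl => exact ⟨le_rfl, 0, by simp⟩
  | tail hab hbc ih =>
    obtain ⟨hle, s, hs, hcong⟩ := ih
    obtain ⟨_, ht, hrow⟩ := hbc
    rcases hrow with h1 | h1
    · refine ⟨by omega, s, by omega, ?_⟩
      rw [h1, hcong]
    · refine ⟨by omega, s + 1, by omega, ?_⟩
      rw [h1]
      push_cast [ZMod.natCast_mod]
      rw [hcong]; ring

/-- In `G_w` with `w = 3k+1`, for `j ≤ w-1` and `t ≤ w/3 - 1`: any
ancestor `X_{j',t'}` of `X_{j,t}` satisfies `j' ≡ j - 3s (mod w)` for some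
`0 ≤ s ≤ t - t'`; in particular no vertex in row `(j+1) % w` or `(j+2) % w` has a
directed path to `X_{j,t}`. -/
theorem ancestors_rows_congruent (k : ℕ) (hk : 1 ≤ k) (j t : ℕ)
    (hj : j ≤ 3 * k + 1 - 1) (ht : t ≤ (3 * k + 1) / 3 - 1) :
    (∀ j' t' : ℕ,
        Relation.ReflTransGen (GwDir (3 * k + 1)) ((j', t') : Vtx) ((j, t) : Vtx) →
        ∃ s : ℕ, s ≤ t - t' ∧
          (j' : ℤ) ≡ (j : ℤ) - 3 * (s : ℤ) [ZMOD (3 * k + 1 : ℕ)]) ∧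
      (∀ t' : ℕ,
        ¬ Relation.ReflTransGen (GwDir (3 * k + 1))
            (((j + 1) % (3 * k + 1), t') : Vtx) ((j, t) : Vtx) ∧
        ¬ Relation.ReflTransGen (GwDir (3 * k + 1))
            (((j + 2) % (3 * k + 1), t') : Vtx) ((j, t) : Vtx)) := by
  set w := 3 * k + 1 with hw
  have hdiv : w / 3 = k := by omega
  have main : ∀ j' t' : ℕ,
      Relation.ReflTransGen (GwDir w) ((j', t') : Vtx) ((j, t) : Vtx) →
      ∃ s : ℕ, s ≤ t - t' ∧
        (j' : ℤ) ≡ (j : ℤ) - 3 * (s : ℤ) [ZMOD w] := by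
    intro j' t' hpath
    obtain ⟨hle, s, hs, hcong⟩ := GwDir_path_row w _ _ hpath
    refine ⟨s, hs, ?_⟩
    rw [← ZMod.intCast_eq_intCast_iff]
    push_cast
    simp only [Prod.fst] at hcong
    rw [hcong]; ring
  refine ⟨main, ?_⟩
  intro t'
  have hsmall : ∀ c j', j' = (j + c) % w → 1 ≤ c → c ≤ 2 →
      ¬ Relation.ReflTransGen (GwDir w) ((j', t') : Vtx) ((j, t) : Vtx) := by
    intro c j' hj' hc1 hc2 hpath
    obtain ⟨s, hs, hcong⟩ := main j' t' hpath
    have hst : s ≤ k - 1 := by omega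
    subst hj'
    have hmm : (((j + c) % w : ℕ) : ℤ) ≡ ((j + c : ℕ) : ℤ) [ZMOD (w : ℕ)] :=
      Int.natCast_modEq_iff.mpr (Nat.mod_modEq _ _)
    have htr : ((j + c : ℕ) : ℤ) ≡ (j : ℤ) - 3 * (s : ℤ) [ZMOD (w : ℕ)] :=
      hmm.symm.trans hcong
    have h2 : (w : ℤ) ∣ ((3 * s + c : ℕ) : ℤ) := by
      have h3 := htr.symm.dvd
      push_cast at h3 ⊢
      convert h3 using 1
      ring
    have hdvd : w ∣ 3 * s + c := Int.natCast_dvd_natCast.mp h2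
    have := Nat.le_of_dvd (by omega) hdvd
    omega
  exact ⟨hsmall 1 _ rfl (by omega) (by omega), hsmall 2 _ rfl (by omega) (by omega)⟩
end

section
/- Let k ≥ 1, w = 3k+1, 0 ≤ j ≤ w−1, and t ≤ w/3 − 1. In the graph G_w, if U and V are two vertices each having a directed path (possibly of length 0) to X_{j,t}, then there is no bidirected edge of G_w between U and V. Consequently, no subgraph of G_w with at least two vertices consisting only of ancestors of X_{j,t} is a C-component. -/
open Relation

/-- Characterization of ancestors of `(j, t)` in `G_w`: they sit at a layer `s ≤ t` and
their row is congruent to `j - 3m` mod `w` for some `m ≤ t - s`. -/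
lemma anc_char (w j t : ℕ) (U : Vtx) (h : Relation.ReflTransGen (GwDir w) U ((j, t) : Vtx)) :
    U.2 ≤ t ∧ ∃ m : ℕ, U.2 + m ≤ t ∧ (U.1 + 3 * m) % w = j % w := by
  induction h using Relation.ReflTransGen.head_induction_on with
  | refl => exact ⟨le_rfl, 0, by omega, by simp⟩
  | @head U c hstep _ ih =>
    obtain ⟨hlt, hc2, hc1⟩ := hstep
    obtain ⟨hle, m', hm', hmod⟩ := ih
    refine ⟨by omega, ?_⟩
    rcases hc1 with h1 | h1
    · exact ⟨m', by omega, by rw [h1] at hmod; exact hmod⟩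
    · refine ⟨m' + 1, by omega, ?_⟩
      rw [h1, Nat.mod_add_mod] at hmod
      have : U.1 + 3 * (m' + 1) = U.1 + 3 + 3 * m' := by ring
      rw [this]; exact hmod

lemma no_half (k j t : ℕ) (ht : t < k) (U V : Vtx)
    (hU : Relation.ReflTransGen (GwDir (3 * k + 1)) U ((j, t) : Vtx))
    (hV : Relation.ReflTransGen (GwDir (3 * k + 1)) V ((j, t) : Vtx))
    (h : GwBiHalf (3 * k + 1) U V) : False := by
  obtain ⟨hleU, m, hm, hmodU⟩ := anc_char _ _ _ _ hU
  obtain ⟨hleV, m', hm', hmodV⟩ := anc_char _ _ _ _ hV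
  obtain ⟨hUlt, hV2, hV1⟩ := h
  obtain ⟨c, hc12, h1⟩ : ∃ c, (c = 1 ∨ c = 2) ∧ V.1 = (U.1 + c) % (3 * k + 1) := by
    rcases hV1 with h | h
    exacts [⟨1, Or.inl rfl, h⟩, ⟨2, Or.inr rfl, h⟩]
  rw [h1, Nat.mod_add_mod] at hmodV
  have key : U.1 + (c + 3 * m') ≡ U.1 + 3 * m [MOD 3 * k + 1] := by
    have : U.1 + c + 3 * m' = U.1 + (c + 3 * m') := by ring
    rw [this] at hmodV
    exact hmodV.trans hmodU.symm
  have h2 := Nat.ModEq.add_left_cancel' U.1 key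
  have hb1 : c + 3 * m' < 3 * k + 1 := by omega
  have hb2 : 3 * m < 3 * k + 1 := by omega
  rw [Nat.ModEq, Nat.mod_eq_of_lt hb1, Nat.mod_eq_of_lt hb2] at h2
  omega

/-- In `G_w` with `w = 3k+1`, for `j ≤ w-1` and `t ≤ w/3 - 1`: no two
ancestors of `X_{j,t}` are joined by a bidirected edge of `G_w`; consequently no subgraph
of `G_w` with at least two vertices consisting only of ancestors of `X_{j,t}` is a
C-component. -/
theorem ancestors_no_bidirected (k : ℕ) (hk : 1 ≤ k) (j t : ℕ)
    (hj : j ≤ 3 * k + 1 - 1) (ht : t ≤ (3 * k + 1) / 3 - 1) :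
    (∀ U V : Vtx,
        Relation.ReflTransGen (GwDir (3 * k + 1)) U ((j, t) : Vtx) →
        Relation.ReflTransGen (GwDir (3 * k + 1)) V ((j, t) : Vtx) →
        ¬ GwBi (3 * k + 1) U V) ∧
      (∀ F : MixedGraph, F.IsSubgraphOf (GwAmbient (3 * k + 1)) →
        F.verts ⊆ ancestors (GwDir (3 * k + 1)) {((j, t) : Vtx)} →
        (∃ u ∈ F.verts, ∃ v ∈ F.verts, u ≠ v) →
        ¬ F.IsCComponent) := by
  have ht' : t < k := by omega
  have part1 : ∀ U V : Vtx,
      Relation.ReflTransGen (GwDir (3 * k + 1)) U ((j, t) : Vtx) →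
      Relation.ReflTransGen (GwDir (3 * k + 1)) V ((j, t) : Vtx) →
      ¬ GwBi (3 * k + 1) U V := by
    intro U V hU hV hbi
    rcases hbi with h | h
    · exact no_half k j t ht' U V hU hV h
    · exact no_half k j t ht' V U hV hU h
  refine ⟨part1, ?_⟩
  rintro F hsub hanc ⟨u, hu, v, hv, huv⟩ hcc
  have h := hcc u hu v hv
  rcases Relation.ReflTransGen.cases_head h with heq | ⟨c, hstep, _⟩
  · exact huv heq
  · have hbi : GwBi (3 * k + 1) u c ∧ u ∈ F.verts ∧ c ∈ F.verts := by
      rcases hstep with h' | h'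
      · exact hsub.2.2 u c h'
      · obtain ⟨hb, hc1, hu1⟩ := hsub.2.2 c u h'
        exact ⟨hb.symm, hu1, hc1⟩
    obtain ⟨hb, hu1, hc1⟩ := hbi
    obtain ⟨y, hy, hpu⟩ := hanc hu1
    obtain ⟨y', hy', hpc⟩ := hanc hc1
    rw [Set.mem_singleton_iff] at hy hy'
    subst hy; subst hy'
    exact part1 u c hpu hpc hb
end

section
/- Let k ≥ 2 and w = 3k+1. In the graph G_w, each of the vertices X_{0,1}, X_{1,1}, and X_{w−1,1} has a directed path to X_{w−1,w−2} that uses no directed edge pointing into X_{0,0}; that is, {X_{0,1}, X_{1,1}, X_{w−1,1}} ⊆ An({X_{w−1,w−2}}, (G_w)_{\overline{\{X_{0,0}\}}}). In particular, X_{0,1} reaches row w−1 along diagonal edges at time (w−1)/3 + 1 and X_{1,1} reaches row w−1 along diagonal edges (wrapping around modulo w) at time 2(w−1)/3 + 1, continuing horizontally to X_{w−1,w−2} in both cases. -/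
open Relation

private lemma gw_step {w : ℕ} {u v : Vtx} (h : GwDir w u v) (hv : v.2 ≠ 0) :
    withoutInto (GwDir w) {((0 : ℕ), (0 : ℕ))} u v := by
  refine ⟨h, fun he => hv ?_⟩
  simp only [Set.mem_singleton_iff] at he
  rw [he]

private lemma horiz_path (w i t t' : ℕ) (hi : i < w) (ht : t ≤ t') :
    Relation.ReflTransGen (withoutInto (GwDir w) {((0 : ℕ), (0 : ℕ))}) (i, t) (i, t') := by
  obtain ⟨d, rfl⟩ := Nat.exists_eq_add_of_le ht
  induction d with
  | zero => exact Relation.ReflTransGen.refl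
  | succ d ih =>
    exact (ih (by omega)).tail (gw_step ⟨hi, rfl, Or.inl rfl⟩ (by simp))

private lemma diag_path (w i t j i' t' : ℕ) (h : i + 3 * j < w)
    (hi' : i' = i + 3 * j) (ht' : t' = t + j) :
    Relation.ReflTransGen (withoutInto (GwDir w) {((0 : ℕ), (0 : ℕ))}) (i, t) (i', t') := by
  subst hi' ht'
  induction j with
  | zero => simpa using Relation.ReflTransGen.refl
  | succ j ih =>
    refine (ih (by omega)).tail (gw_step ⟨by omega, rfl, Or.inr ?_⟩ (by simp))
    show i + 3 * (j + 1) = (i + 3 * j + 3) % w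
    rw [Nat.mod_eq_of_lt (by omega)]
    omega

/-- In `G_w` with `w = 3k+1`, `k ≥ 2`, the vertices `X_{0,1}`, `X_{1,1}`
and `X_{w-1,1}` all have directed paths to `X_{w-1,w-2}` avoiding edges into `X_{0,0}`;
`X_{0,1}` reaches row `w-1` at time `(w-1)/3 + 1`, and `X_{1,1}` (wrapping around modulo
`w`) at time `2(w-1)/3 + 1`, continuing horizontally to `X_{w-1,w-2}` in both cases. -/
theorem roots_reach_target (k : ℕ) (hk : 2 ≤ k) :
    (({((0 : ℕ), (1 : ℕ)), ((1 : ℕ), (1 : ℕ)),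
        ((3 * k + 1 - 1 : ℕ), (1 : ℕ))} : Set Vtx) ⊆
      ancestors (withoutInto (GwDir (3 * k + 1)) {((0 : ℕ), (0 : ℕ))})
        {((3 * k + 1 - 1 : ℕ), (3 * k + 1 - 2 : ℕ))}) ∧
    Relation.ReflTransGen (withoutInto (GwDir (3 * k + 1)) {((0 : ℕ), (0 : ℕ))})
      ((0 : ℕ), (1 : ℕ)) ((3 * k + 1 - 1 : ℕ), ((3 * k + 1 - 1) / 3 + 1 : ℕ)) ∧
    Relation.ReflTransGen (withoutInto (GwDir (3 * k + 1)) {((0 : ℕ), (0 : ℕ))})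
      ((3 * k + 1 - 1 : ℕ), ((3 * k + 1 - 1) / 3 + 1 : ℕ))
      ((3 * k + 1 - 1 : ℕ), (3 * k + 1 - 2 : ℕ)) ∧
    Relation.ReflTransGen (withoutInto (GwDir (3 * k + 1)) {((0 : ℕ), (0 : ℕ))})
      ((1 : ℕ), (1 : ℕ)) ((3 * k + 1 - 1 : ℕ), (2 * (3 * k + 1 - 1) / 3 + 1 : ℕ)) ∧
    Relation.ReflTransGen (withoutInto (GwDir (3 * k + 1)) {((0 : ℕ), (0 : ℕ))})
      ((3 * k + 1 - 1 : ℕ), (2 * (3 * k + 1 - 1) / 3 + 1 : ℕ))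
      ((3 * k + 1 - 1 : ℕ), (3 * k + 1 - 2 : ℕ)) ∧
    Relation.ReflTransGen (withoutInto (GwDir (3 * k + 1)) {((0 : ℕ), (0 : ℕ))})
      ((3 * k + 1 - 1 : ℕ), (1 : ℕ)) ((3 * k + 1 - 1 : ℕ), (3 * k + 1 - 2 : ℕ)) := by
  have e3 : ((3 * k + 1 - 1) / 3 + 1 : ℕ) = k + 1 := by omega
  have e4 : (2 * (3 * k + 1 - 1) / 3 + 1 : ℕ) = 2 * k + 1 := by omega
  have e1 : (3 * k + 1 - 1 : ℕ) = 3 * k := by omega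
  have e2 : (3 * k + 1 - 2 : ℕ) = 3 * k - 1 := by omega
  rw [e3, e4, e1, e2]
  have P1 : Relation.ReflTransGen (withoutInto (GwDir (3 * k + 1)) {((0 : ℕ), (0 : ℕ))})
      ((0 : ℕ), (1 : ℕ)) ((3 * k : ℕ), (k + 1 : ℕ)) :=
    diag_path (3 * k + 1) 0 1 k _ _ (by omega) (by omega) (by omega)
  have P2 : Relation.ReflTransGen (withoutInto (GwDir (3 * k + 1)) {((0 : ℕ), (0 : ℕ))})
      ((3 * k : ℕ), (k + 1 : ℕ)) ((3 * k : ℕ), (3 * k - 1 : ℕ)) :=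
    horiz_path _ _ _ _ (by omega) (by omega)
  have P3a : Relation.ReflTransGen (withoutInto (GwDir (3 * k + 1)) {((0 : ℕ), (0 : ℕ))})
      ((1 : ℕ), (1 : ℕ)) ((3 * k - 2 : ℕ), (k : ℕ)) :=
    diag_path (3 * k + 1) 1 1 (k - 1) _ _ (by omega) (by omega) (by omega)
  have P3b : withoutInto (GwDir (3 * k + 1)) {((0 : ℕ), (0 : ℕ))}
      ((3 * k - 2 : ℕ), (k : ℕ)) ((0 : ℕ), (k + 1 : ℕ)) := by
    refine gw_step ⟨by omega, rfl, Or.inr ?_⟩ (by simp)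
    show (0 : ℕ) = (3 * k - 2 + 3) % (3 * k + 1)
    rw [show 3 * k - 2 + 3 = 3 * k + 1 by omega, Nat.mod_self]
  have P3c : Relation.ReflTransGen (withoutInto (GwDir (3 * k + 1)) {((0 : ℕ), (0 : ℕ))})
      ((0 : ℕ), (k + 1 : ℕ)) ((3 * k : ℕ), (2 * k + 1 : ℕ)) :=
    diag_path (3 * k + 1) 0 (k + 1) k _ _ (by omega) (by omega) (by omega)
  have P3 : Relation.ReflTransGen (withoutInto (GwDir (3 * k + 1)) {((0 : ℕ), (0 : ℕ))})
      ((1 : ℕ), (1 : ℕ)) ((3 * k : ℕ), (2 * k + 1 : ℕ)) :=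
    (P3a.tail P3b).trans P3c
  have P4 : Relation.ReflTransGen (withoutInto (GwDir (3 * k + 1)) {((0 : ℕ), (0 : ℕ))})
      ((3 * k : ℕ), (2 * k + 1 : ℕ)) ((3 * k : ℕ), (3 * k - 1 : ℕ)) :=
    horiz_path _ _ _ _ (by omega) (by omega)
  have P5 : Relation.ReflTransGen (withoutInto (GwDir (3 * k + 1)) {((0 : ℕ), (0 : ℕ))})
      ((3 * k : ℕ), (1 : ℕ)) ((3 * k : ℕ), (3 * k - 1 : ℕ)) :=
    horiz_path _ _ _ _ (by omega) (by omega)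
  refine ⟨?_, P1, P2, P3, P4, P5⟩
  intro v hv
  simp only [Set.mem_insert_iff, Set.mem_singleton_iff] at hv
  rcases hv with rfl | rfl | rfl
  · exact ⟨_, rfl, P1.trans P2⟩
  · exact ⟨_, rfl, P3.trans P4⟩
  · exact ⟨_, rfl, P5⟩
end
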